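/- arXiv:math/0609642 — 3 statements merged into one kernel-verified Lean document; each statement's English description precedes it below -/
import Mathlib

section
/- Let f, g : ℝ → ℝ be C¹ functions with f(x) + g(y) > 0 for all (x, y). On ℝ⁴ with coordinates (x, y, p₁, p₂), define H(x, y, p₁, p₂) := (p₁² + p₂²)/(f(x) + g(y)) and F := p₁² − f(x)·H. Then the canonical Poisson bracket {F, H} vanishes identically; that is, F is a first integral of the Hamiltonian system with Hamiltonian H. -/
/-!
By the Leibniz rule and `{H, H} = 0`,
`{p₁² − f H, H} = {p₁², H} − H {f, H} = 2 p₁ ∂ₓH + H f' ∂_{p₁}H`.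
With `D = f(x) + g(y)` one has `∂ₓH = −f' H / D` and `∂_{p₁}H = 2 p₁ / D`,
so the two terms cancel.
-/

/-- Partial derivative in the `i`-th coordinate direction on ℝ⁴,
with coordinates `(x, y, p₁, p₂) = (z 0, z 1, z 2, z 3)`. -/
noncomputable def pd4 (i : Fin 4) (F : (Fin 4 → ℝ) → ℝ) (z : Fin 4 → ℝ) : ℝ :=
  fderiv ℝ F z (Pi.single i 1)

/-- The canonical Poisson bracket on ℝ⁴ ≅ T*ℝ² with Darboux coordinates
`(x, y, p₁, p₂)`:
`{F, G} = (∂F/∂p₁)(∂G/∂x) + (∂F/∂p₂)(∂G/∂y) − (∂F/∂x)(∂G/∂p₁) − (∂F/∂y)(∂G/∂p₂)`. -/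
noncomputable def poisson (F G : (Fin 4 → ℝ) → ℝ) (z : Fin 4 → ℝ) : ℝ :=
  pd4 2 F z * pd4 0 G z + pd4 3 F z * pd4 1 G z
    - pd4 0 F z * pd4 2 G z - pd4 1 F z * pd4 3 G z

section Bracket

variable {A B G : (Fin 4 → ℝ) → ℝ} {z : Fin 4 → ℝ}

theorem pd4_sub (hA : DifferentiableAt ℝ A z) (hB : DifferentiableAt ℝ B z) (i : Fin 4) :
    pd4 i (fun w => A w - B w) z = pd4 i A z - pd4 i B z := by
  simp [pd4, fderiv_fun_sub hA hB]

theorem pd4_mul (hA : DifferentiableAt ℝ A z) (hB : DifferentiableAt ℝ B z) (i : Fin 4) :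
    pd4 i (fun w => A w * B w) z = A z * pd4 i B z + B z * pd4 i A z := by
  simp [pd4, fderiv_fun_mul hA hB]

theorem pd4_comp_apply {φ : ℝ → ℝ} {j : Fin 4} (hφ : DifferentiableAt ℝ φ (z j))
    (i : Fin 4) :
    pd4 i (fun w => φ (w j)) z = if j = i then deriv φ (z j) else 0 := by
  have hφj : HasFDerivAt (fun w => φ (w j))
      (deriv φ (z j) • ContinuousLinearMap.proj (R := ℝ) (φ := fun _ : Fin 4 => ℝ) j) z :=
    hφ.hasDerivAt.comp_hasFDerivAt z (hasFDerivAt_apply (𝕜 := ℝ) (F' := fun _ => ℝ) j z)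
  simp [pd4, hφj.fderiv, Pi.single_apply]

theorem pd4_eq_deriv_update (hA : DifferentiableAt ℝ A z) (i : Fin 4) :
    pd4 i A z = deriv (fun t => A (Function.update z i t)) (z i) := by
  have hA' : HasFDerivAt A (fderiv ℝ A z) (Function.update z i (z i)) := by
    simpa using hA.hasFDerivAt
  exact (hA'.comp_hasDerivAt (z i) (hasDerivAt_update z i (z i))).deriv.symm

theorem poisson_self : poisson G G z = 0 := by
  unfold poisson; ring

theorem poisson_sub_left (hA : DifferentiableAt ℝ A z) (hB : DifferentiableAt ℝ B z) :
    poisson (fun w => A w - B w) G z = poisson A G z - poisson B G z := by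
  simp only [poisson, pd4_sub hA hB]; ring

theorem poisson_mul_left (hA : DifferentiableAt ℝ A z) (hB : DifferentiableAt ℝ B z) :
    poisson (fun w => A w * B w) G z = A z * poisson B G z + B z * poisson A G z := by
  simp only [poisson, pd4_mul hA hB]; ring

theorem poisson_comp_apply_zero {φ : ℝ → ℝ} (hφ : DifferentiableAt ℝ φ (z 0)) :
    poisson (fun w => φ (w 0)) G z = -(deriv φ (z 0) * pd4 2 G z) := by
  simp [poisson, pd4_comp_apply hφ]

theorem poisson_comp_apply_two {φ : ℝ → ℝ} (hφ : DifferentiableAt ℝ φ (z 2)) :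
    poisson (fun w => φ (w 2)) G z = deriv φ (z 2) * pd4 0 G z := by
  simp [poisson, pd4_comp_apply hφ]

end Bracket

section Liouville

variable {f g : ℝ → ℝ} {z : Fin 4 → ℝ}

noncomputable def liouvilleHamiltonian (f g : ℝ → ℝ) (z : Fin 4 → ℝ) : ℝ :=
  (z 2 ^ 2 + z 3 ^ 2) / (f (z 0) + g (z 1))

noncomputable def liouvilleIntegral (f g : ℝ → ℝ) (z : Fin 4 → ℝ) : ℝ :=
  z 2 ^ 2 - f (z 0) * liouvilleHamiltonian f g z

theorem differentiableAt_liouvilleHamiltonian (hf : DifferentiableAt ℝ f (z 0))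
    (hg : DifferentiableAt ℝ g (z 1)) (hD : f (z 0) + g (z 1) ≠ 0) :
    DifferentiableAt ℝ (liouvilleHamiltonian f g) z := by
  unfold liouvilleHamiltonian
  fun_prop (disch := exact hD)

theorem pd4_zero_liouvilleHamiltonian (hf : DifferentiableAt ℝ f (z 0))
    (hg : DifferentiableAt ℝ g (z 1)) (hD : f (z 0) + g (z 1) ≠ 0) :
    pd4 0 (liouvilleHamiltonian f g) z =
      -(deriv f (z 0) * liouvilleHamiltonian f g z / (f (z 0) + g (z 1))) := by
  rw [pd4_eq_deriv_update (differentiableAt_liouvilleHamiltonian hf hg hD)]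
  simp only [liouvilleHamiltonian, Function.update_apply, Fin.reduceEq, if_true, if_false]
  rw [((hasDerivAt_const (z 0) (z 2 ^ 2 + z 3 ^ 2)).fun_div
    (hf.hasDerivAt.add_const (g (z 1))) hD).deriv]
  field_simp
  ring

theorem pd4_two_liouvilleHamiltonian (hf : DifferentiableAt ℝ f (z 0))
    (hg : DifferentiableAt ℝ g (z 1)) (hD : f (z 0) + g (z 1) ≠ 0) :
    pd4 2 (liouvilleHamiltonian f g) z = 2 * z 2 / (f (z 0) + g (z 1)) := by
  rw [pd4_eq_deriv_update (differentiableAt_liouvilleHamiltonian hf hg hD)]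
  simp [liouvilleHamiltonian]

theorem poisson_liouvilleIntegral_liouvilleHamiltonian (hf : DifferentiableAt ℝ f (z 0))
    (hg : DifferentiableAt ℝ g (z 1)) (hD : f (z 0) + g (z 1) ≠ 0) :
    poisson (liouvilleIntegral f g) (liouvilleHamiltonian f g) z = 0 := by
  have hH := differentiableAt_liouvilleHamiltonian hf hg hD
  have hfx : DifferentiableAt ℝ (fun w : Fin 4 → ℝ => f (w 0)) z := by fun_prop
  unfold liouvilleIntegral
  rw [poisson_sub_left (by fun_prop) (hfx.fun_mul hH), poisson_mul_left hfx hH, poisson_self,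
    poisson_comp_apply_two (φ := fun t => t ^ 2) (by fun_prop), poisson_comp_apply_zero hf,
    pd4_zero_liouvilleHamiltonian hf hg hD, pd4_two_liouvilleHamiltonian hf hg hD,
    deriv_pow_field]
  field_simp
  ring

end Liouville

/-- For the geodesic Hamiltonian `H = (p₁² + p₂²)/(f(x) + g(y))` of a Liouville metric,
`F = p₁² − f(x)·H` is a first integral: `{F, H} = 0`. -/
theorem stmt4 (f g : ℝ → ℝ) (hf : ContDiff ℝ 1 f) (hg : ContDiff ℝ 1 g)
    (hpos : ∀ x y : ℝ, 0 < f x + g y)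
    (H F : (Fin 4 → ℝ) → ℝ)
    (hH : ∀ z, H z = ((z 2) ^ 2 + (z 3) ^ 2) / (f (z 0) + g (z 1)))
    (hF : ∀ z, F z = (z 2) ^ 2 - f (z 0) * H z) :
    ∀ z : Fin 4 → ℝ, poisson F H z = 0 := by
  obtain rfl : H = liouvilleHamiltonian f g := funext hH
  obtain rfl : F = liouvilleIntegral f g := funext hF
  exact fun z => poisson_liouvilleIntegral_liouvilleHamiltonian
    (hf.differentiable one_ne_zero _) (hg.differentiable one_ne_zero _) (hpos _ _).ne'
end

section
/- Let μ ∈ (−1, 1) and κ ∈ ℝ, and define f(x) := (1 + μ cos x)⁻², g(y) := y²(1 − y²), and y(x) := sech(κ + x + μ sin x). Then for all x ∈ ℝ, (y'(x))² = g(y(x))/f(x). -/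
/-!
As a function of `u`, `sech` solves `(dy/du)² = y²(1 - y²)` because `sinh² = cosh² - 1`.
By the chain rule, reparametrizing by `u = κ + x + μ sin x` multiplies `(dy/dx)²` by
`u'(x)² = (1 + μ cos x)² = 1 / f x`.
-/

open Real

theorem hasDerivAt_phase (κ μ x : ℝ) :
    HasDerivAt (fun x => κ + x + μ * sin x) (1 + μ * cos x) x :=
  ((hasDerivAt_id x).const_add κ).add ((hasDerivAt_sin x).const_mul μ)

theorem sq_sinh_div_cosh_sq (u : ℝ) :
    (sinh u / cosh u ^ 2) ^ 2 = (cosh u)⁻¹ ^ 2 * (1 - (cosh u)⁻¹ ^ 2) := by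
  have hcosh : cosh u ≠ 0 := (cosh_pos u).ne'
  have hsinh : sinh u ^ 2 = cosh u ^ 2 - 1 := by linarith [cosh_sq u]
  field_simp
  linear_combination hsinh

theorem sq_deriv_sech_comp {φ : ℝ → ℝ} {φ' x : ℝ} (hφ : HasDerivAt φ φ' x) :
    deriv (fun x => (cosh (φ x))⁻¹) x ^ 2
      = (cosh (φ x))⁻¹ ^ 2 * (1 - (cosh (φ x))⁻¹ ^ 2) * φ' ^ 2 := by
  have hsech : HasDerivAt (fun x => (cosh (φ x))⁻¹) (-(sinh (φ x) * φ') / cosh (φ x) ^ 2) x :=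
    hφ.cosh.inv (cosh_pos _).ne'
  rw [hsech.deriv, ← sq_sinh_div_cosh_sq]
  ring

theorem stmt10_general (μ κ : ℝ)
    (f g y : ℝ → ℝ)
    (hf : ∀ x : ℝ, f x = ((1 + μ * Real.cos x) ^ 2)⁻¹)
    (hg : ∀ t : ℝ, g t = t ^ 2 * (1 - t ^ 2))
    (hy : ∀ x : ℝ, y x = (Real.cosh (κ + x + μ * Real.sin x))⁻¹) :
    ∀ x : ℝ, (deriv y x) ^ 2 = g (y x) / f x := by
  intro x
  rw [funext hy, sq_deriv_sech_comp (hasDerivAt_phase κ μ x), hg, hf, div_inv_eq_mul]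

/-- The explicit homoclinic solution of the paper's example: for
`f(x) = (1 + μ cos x)⁻²`, `g(y) = y²(1 − y²)`, the hyperbolic-secant profile
`y(x) = sech(κ + x + μ sin x)` satisfies the orbit equation `y'² = g(y)/f(x)`. -/
theorem stmt10 (μ κ : ℝ) (hμ : μ ∈ Set.Ioo (-1 : ℝ) 1)
    (f g y : ℝ → ℝ)
    (hf : ∀ x : ℝ, f x = ((1 + μ * Real.cos x) ^ 2)⁻¹)
    (hg : ∀ t : ℝ, g t = t ^ 2 * (1 - t ^ 2))
    (hy : ∀ x : ℝ, y x = (Real.cosh (κ + x + μ * Real.sin x))⁻¹) :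
    ∀ x : ℝ, (deriv y x) ^ 2 = g (y x) / f x :=
  stmt10_general μ κ f g y hf hg hy
end

section
/- Let 0 < μ < 1/4, κ ∈ ℝ, and L > |κ| + 1. Define f(x) := (1 + μ cos x)⁻², g(y) := y²(1 − y²), and y(x) := (1/2) sech(κ + x + μ sin x). Write A(x) := f(x) + g(y(x)), and define K_x(x) := (−f'''(x)·A² + 2f'(x)·g''(y(x))·A + 4f'(x)·f''(x)·A − 3f'(x)·g'(y(x))² − 3f'(x)³)/(2A⁴) and K_y(x) := (−g'''(y(x))·A² + 2f''(x)·g'(y(x))·A + 4g'(y(x))·g''(y(x))·A − 3f'(x)²·g'(y(x)) − 3g'(y(x))³)/(2A⁴), and set I(x) := K_x(x)·g(y(x)) − K_y(x)·f(x)·y'(x). Then B_L := |∫_{L}^{∞} I(x) dx| + |∫_{−∞}^{−L} I(x) dx| satisfies B_L ≤ 1200·(1 + 2e^{2|κ|})·((1/2) sech L)². -/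
open MeasureTheory

open Set

set_option maxHeartbeats 1000000

open Real

-- g derivatives
lemma gd1 (g : ℝ → ℝ) (hg : ∀ t : ℝ, g t = t ^ 2 * (1 - t ^ 2)) :
    deriv g = fun t => 2 * t - 4 * t ^ 3 := by
  have hge : g = fun t => t ^ 2 - t ^ 4 := funext fun t => by rw [hg]; ring
  funext t
  rw [hge]
  have h : HasDerivAt (fun t : ℝ => t ^ 2 - t ^ 4) (2 * t - 4 * t ^ 3) t := by
    have := (hasDerivAt_pow 2 t).sub (hasDerivAt_pow 4 t)
    convert! this using 1; ring
  exact h.deriv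

lemma gd2 (g : ℝ → ℝ) (hg : ∀ t : ℝ, g t = t ^ 2 * (1 - t ^ 2)) :
    deriv (deriv g) = fun t => 2 - 12 * t ^ 2 := by
  rw [gd1 g hg]
  funext t
  have h : HasDerivAt (fun t : ℝ => 2 * t - 4 * t ^ 3) (2 - 12 * t ^ 2) t := by
    have := ((hasDerivAt_id t).const_mul 2).sub ((hasDerivAt_pow 3 t).const_mul 4)
    convert! this using 1; ring
  exact h.deriv

lemma gd3 (g : ℝ → ℝ) (hg : ∀ t : ℝ, g t = t ^ 2 * (1 - t ^ 2)) (t : ℝ) :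
    deriv (deriv (deriv g)) t = -24 * t := by
  rw [gd2 g hg]
  have h : HasDerivAt (fun t : ℝ => 2 - 12 * t ^ 2) (-24 * t) t := by
    have := ((hasDerivAt_pow 2 t).const_mul 12).const_sub 2
    convert! this using 1; ring
  exact h.deriv

open Real

section fder
variable {μ : ℝ}

lemma cpos (hμ0 : 0 < μ) (hμ1 : μ < 1/4) (x : ℝ) : 3/4 ≤ 1 + μ * Real.cos x := by
  nlinarith [Real.neg_one_le_cos x, Real.cos_le_one x]

lemma cne (hμ0 : 0 < μ) (hμ1 : μ < 1/4) (x : ℝ) : 1 + μ * Real.cos x ≠ 0 := by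
  have := cpos hμ0 hμ1 x; linarith

lemma hasDerivAt_c (μ x : ℝ) : HasDerivAt (fun x => 1 + μ * Real.cos x) (-(μ * Real.sin x)) x := by
  have := ((Real.hasDerivAt_cos x).const_mul μ).const_add 1
  convert! this using 1 <;> ring

lemma fd1 (hμ0 : 0 < μ) (hμ1 : μ < 1/4) (x : ℝ) :
    HasDerivAt (fun x => ((1 + μ * Real.cos x) ^ 2)⁻¹)
      (2 * μ * Real.sin x * ((1 + μ * Real.cos x) ^ 3)⁻¹) x := by
  have h2 : HasDerivAt (fun x => (1 + μ * Real.cos x) ^ 2)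
      (2 * (1 + μ * Real.cos x) ^ 1 * -(μ * Real.sin x)) x := by
    simpa using (hasDerivAt_c μ x).fun_pow 2
  have := h2.fun_inv (pow_ne_zero 2 (cne hμ0 hμ1 x))
  convert! this using 1
  have hc := cne hμ0 hμ1 x
  field_simp

lemma fder1 (hμ0 : 0 < μ) (hμ1 : μ < 1/4) :
    deriv (fun x => ((1 + μ * Real.cos x) ^ 2)⁻¹)
      = fun x => 2 * μ * Real.sin x * ((1 + μ * Real.cos x) ^ 3)⁻¹ :=
  funext fun x => (fd1 hμ0 hμ1 x).deriv

lemma fd2 (hμ0 : 0 < μ) (hμ1 : μ < 1/4) (x : ℝ) :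
    HasDerivAt (fun x => 2 * μ * Real.sin x * ((1 + μ * Real.cos x) ^ 3)⁻¹)
      (2 * μ * Real.cos x * ((1 + μ * Real.cos x) ^ 3)⁻¹
        + 6 * μ ^ 2 * (Real.sin x) ^ 2 * ((1 + μ * Real.cos x) ^ 4)⁻¹) x := by
  have hs : HasDerivAt (fun x => 2 * μ * Real.sin x) (2 * μ * Real.cos x) x := by
    have := (Real.hasDerivAt_sin x).const_mul (2 * μ); convert! this using 1 <;> ring
  have h3 : HasDerivAt (fun x => (1 + μ * Real.cos x) ^ 3)
      (3 * (1 + μ * Real.cos x) ^ 2 * -(μ * Real.sin x)) x := by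
    simpa using (hasDerivAt_c μ x).fun_pow 3
  have hinv := h3.fun_inv (pow_ne_zero 3 (cne hμ0 hμ1 x))
  have := hs.mul hinv
  convert! this using 1
  have hc := cne hμ0 hμ1 x
  field_simp
  ring

lemma fder2 (hμ0 : 0 < μ) (hμ1 : μ < 1/4) :
    deriv (deriv (fun x => ((1 + μ * Real.cos x) ^ 2)⁻¹))
      = fun x => 2 * μ * Real.cos x * ((1 + μ * Real.cos x) ^ 3)⁻¹
        + 6 * μ ^ 2 * (Real.sin x) ^ 2 * ((1 + μ * Real.cos x) ^ 4)⁻¹ := by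
  rw [fder1 hμ0 hμ1]
  exact funext fun x => (fd2 hμ0 hμ1 x).deriv

lemma fd3 (hμ0 : 0 < μ) (hμ1 : μ < 1/4) (x : ℝ) :
    HasDerivAt (fun x => 2 * μ * Real.cos x * ((1 + μ * Real.cos x) ^ 3)⁻¹
        + 6 * μ ^ 2 * (Real.sin x) ^ 2 * ((1 + μ * Real.cos x) ^ 4)⁻¹)
      (-(2 * μ * Real.sin x) * ((1 + μ * Real.cos x) ^ 3)⁻¹
        + 18 * μ ^ 2 * Real.sin x * Real.cos x * ((1 + μ * Real.cos x) ^ 4)⁻¹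
        + 24 * μ ^ 3 * (Real.sin x) ^ 3 * ((1 + μ * Real.cos x) ^ 5)⁻¹) x := by
  have hc := cne hμ0 hμ1 x
  have h1 : HasDerivAt (fun x => 2 * μ * Real.cos x) (-(2 * μ * Real.sin x)) x := by
    have := (Real.hasDerivAt_cos x).const_mul (2 * μ); convert! this using 1 <;> ring
  have h3 : HasDerivAt (fun x => (1 + μ * Real.cos x) ^ 3)
      (3 * (1 + μ * Real.cos x) ^ 2 * -(μ * Real.sin x)) x := by
    simpa using (hasDerivAt_c μ x).fun_pow 3
  have h4 : HasDerivAt (fun x => (1 + μ * Real.cos x) ^ 4)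
      (4 * (1 + μ * Real.cos x) ^ 3 * -(μ * Real.sin x)) x := by
    simpa using (hasDerivAt_c μ x).fun_pow 4
  have hs2 : HasDerivAt (fun x => 6 * μ ^ 2 * (Real.sin x) ^ 2)
      (6 * μ ^ 2 * (2 * Real.sin x * Real.cos x)) x := by
    have := ((Real.hasDerivAt_sin x).fun_pow 2).const_mul (6 * μ ^ 2)
    convert! this using 1 <;> ring
  have hA := h1.mul (h3.fun_inv (pow_ne_zero 3 hc))
  have hB := hs2.mul (h4.fun_inv (pow_ne_zero 4 hc))
  have := hA.add hB
  convert! this using 1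
  field_simp
  ring

end fder

open Real

lemma yd (μ κ x : ℝ) :
    HasDerivAt (fun x => (1/2 : ℝ) * (Real.cosh (κ + x + μ * Real.sin x))⁻¹)
      (-((1/2) * Real.sinh (κ + x + μ * Real.sin x) * (1 + μ * Real.cos x)
          * ((Real.cosh (κ + x + μ * Real.sin x)) ^ 2)⁻¹)) x := by
  have hu : HasDerivAt (fun x => κ + x + μ * Real.sin x) (1 + μ * Real.cos x) x := by
    have := ((hasDerivAt_id x).const_add κ).add ((Real.hasDerivAt_sin x).const_mul μ)
    convert! this using 1 <;> ring
  have hch : HasDerivAt (fun x => Real.cosh (κ + x + μ * Real.sin x))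
      (Real.sinh (κ + x + μ * Real.sin x) * (1 + μ * Real.cos x)) x := hu.cosh
  have hne : Real.cosh (κ + x + μ * Real.sin x) ≠ 0 :=
    ne_of_gt (Real.cosh_pos _)
  have := (hch.fun_inv hne).const_mul (1/2 : ℝ)
  convert! this using 1
  try field_simp
  try ring


-- core algebraic bound
lemma algbound (A Y f fd1 fd2 fd3 gY gd1 gd2 gd3 ydv : ℝ)
    (hY0 : 0 < Y) (hY : Y ≤ 1/2)
    (hA0 : 16/25 ≤ A) (hfA : f ≤ A) (hf0 : 0 ≤ f)
    (hfd1 : |fd1| ≤ 32/27) (hfd2 : |fd2| ≤ 64/27) (hfd3 : |fd3| ≤ 512/81)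
    (hgY0 : 0 ≤ gY) (hgY : gY ≤ Y^2)
    (hgd1 : |gd1| ≤ 3*Y) (hgd2 : |gd2| ≤ 2) (hgd3 : |gd3| ≤ 24*Y)
    (hyd : |ydv| ≤ 5/4*Y) :
    |((-fd3*A^2 + 2*fd1*gd2*A + 4*fd1*fd2*A - 3*fd1*gd1^2 - 3*fd1^3)/(2*A^4)) * gY
      - ((-gd3*A^2 + 2*fd2*gd1*A + 4*gd1*gd2*A - 3*fd1^2*gd1 - 3*gd1^3)/(2*A^4)) * f * ydv|
      ≤ 300*Y^2 := by
  have hA0' : (0:ℝ) < A := by linarith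
  have hA4 : (0:ℝ) < 2*A^4 := by positivity
  -- numerator bounds
  have hNx : |(-fd3*A^2 + 2*fd1*gd2*A + 4*fd1*fd2*A - 3*fd1*gd1^2 - 3*fd1^3)|
      ≤ 512/81*A^2 + 16*A + 13 := by
    have t1 : |fd3*A^2| ≤ 512/81*A^2 := by
      rw [abs_mul, abs_of_nonneg (by positivity : (0:ℝ) ≤ A^2)]
      exact mul_le_mul_of_nonneg_right hfd3 (by positivity)
    have t2 : |2*fd1*gd2*A| ≤ 2*(32/27)*2*A := by
      rw [abs_mul, abs_mul, abs_mul, abs_of_nonneg hA0'.le]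
      have : |(2:ℝ)| = 2 := by norm_num
      rw [this]
      have h1 : |fd1| * |gd2| ≤ (32/27)*2 :=
        mul_le_mul hfd1 hgd2 (abs_nonneg _) (by norm_num)
      nlinarith [abs_nonneg gd2, abs_nonneg fd1]
    have t3 : |4*fd1*fd2*A| ≤ 4*(32/27)*(64/27)*A := by
      rw [abs_mul, abs_mul, abs_mul, abs_of_nonneg hA0'.le]
      have : |(4:ℝ)| = 4 := by norm_num
      rw [this]
      have h1 : |fd1| * |fd2| ≤ (32/27)*(64/27) :=
        mul_le_mul hfd1 hfd2 (abs_nonneg _) (by norm_num)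
      nlinarith [abs_nonneg fd2, abs_nonneg fd1]
    have t4 : |3*fd1*gd1^2| ≤ 3*(32/27)*(3*Y)^2 := by
      rw [abs_mul, abs_mul]
      have : |(3:ℝ)| = 3 := by norm_num
      rw [this]
      have h2 : |gd1^2| ≤ (3*Y)^2 := by
        rw [abs_pow]; exact pow_le_pow_left₀ (abs_nonneg _) hgd1 2
      nlinarith [abs_nonneg fd1, abs_nonneg (gd1^2), sq_nonneg (3*Y)]
    have t5 : |3*fd1^3| ≤ 3*(32/27)^3 := by
      rw [abs_mul, abs_pow]
      have : |(3:ℝ)| = 3 := by norm_num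
      rw [this]
      have := pow_le_pow_left₀ (abs_nonneg fd1) hfd1 3
      nlinarith
    have hsum : |(-fd3*A^2 + 2*fd1*gd2*A + 4*fd1*fd2*A - 3*fd1*gd1^2 - 3*fd1^3)|
        ≤ |fd3*A^2| + |2*fd1*gd2*A| + |4*fd1*fd2*A| + |3*fd1*gd1^2| + |3*fd1^3| := by
      calc |(-fd3*A^2 + 2*fd1*gd2*A + 4*fd1*fd2*A - 3*fd1*gd1^2 - 3*fd1^3)|
          ≤ |(-fd3*A^2 + 2*fd1*gd2*A + 4*fd1*fd2*A - 3*fd1*gd1^2)| + |3*fd1^3| :=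
            abs_sub _ _
        _ ≤ |(-fd3*A^2 + 2*fd1*gd2*A + 4*fd1*fd2*A)| + |3*fd1*gd1^2| + |3*fd1^3| := by
            have := abs_sub (-fd3*A^2 + 2*fd1*gd2*A + 4*fd1*fd2*A) (3*fd1*gd1^2)
            linarith
        _ ≤ |(-fd3*A^2 + 2*fd1*gd2*A)| + |4*fd1*fd2*A| + |3*fd1*gd1^2| + |3*fd1^3| := by
            have := abs_add_le (-fd3*A^2 + 2*fd1*gd2*A) (4*fd1*fd2*A)
            linarith
        _ ≤ |(-fd3*A^2)| + |2*fd1*gd2*A| + |4*fd1*fd2*A| + |3*fd1*gd1^2| + |3*fd1^3| := by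
            have := abs_add_le (-fd3*A^2) (2*fd1*gd2*A)
            linarith
        _ = |fd3*A^2| + |2*fd1*gd2*A| + |4*fd1*fd2*A| + |3*fd1*gd1^2| + |3*fd1^3| := by
            rw [neg_mul, abs_neg]
    have hY2 : Y^2 ≤ 1/4 := by nlinarith
    calc |(-fd3*A^2 + 2*fd1*gd2*A + 4*fd1*fd2*A - 3*fd1*gd1^2 - 3*fd1^3)|
        ≤ |fd3*A^2| + |2*fd1*gd2*A| + |4*fd1*fd2*A| + |3*fd1*gd1^2| + |3*fd1^3| := hsum
      _ ≤ 512/81*A^2 + 2*(32/27)*2*A + 4*(32/27)*(64/27)*A + 3*(32/27)*(3*Y)^2 + 3*(32/27)^3 := by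
          linarith
      _ ≤ 512/81*A^2 + 16*A + 13 := by
          have h13 : 3*(32/27)*(3*Y)^2 + 3*((32:ℝ)/27)^3 ≤ 13 := by nlinarith
          have h16 : 2*(32/27)*2*A + 4*(32/27)*(64/27)*A ≤ 16*A := by nlinarith
          linarith
  have hNy : |(-gd3*A^2 + 2*fd2*gd1*A + 4*gd1*gd2*A - 3*fd1^2*gd1 - 3*gd1^3)|
      ≤ 24*Y*A^2 + 39*Y*A + 33*Y := by
    have t1 : |gd3*A^2| ≤ 24*Y*A^2 := by
      rw [abs_mul, abs_of_nonneg (by positivity : (0:ℝ) ≤ A^2)]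
      exact mul_le_mul_of_nonneg_right hgd3 (by positivity)
    have t2 : |2*fd2*gd1*A| ≤ 2*(64/27)*(3*Y)*A := by
      rw [abs_mul, abs_mul, abs_mul, abs_of_nonneg hA0'.le]
      have h2 : |(2:ℝ)| = 2 := by norm_num
      rw [h2]
      have h1 : |fd2| * |gd1| ≤ (64/27)*(3*Y) :=
        mul_le_mul hfd2 hgd1 (abs_nonneg _) (by norm_num)
      nlinarith [abs_nonneg gd1, abs_nonneg fd2]
    have t3 : |4*gd1*gd2*A| ≤ 4*(3*Y)*2*A := by
      rw [abs_mul, abs_mul, abs_mul, abs_of_nonneg hA0'.le]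
      have h2 : |(4:ℝ)| = 4 := by norm_num
      rw [h2]
      have h1 : |gd1| * |gd2| ≤ (3*Y)*2 :=
        mul_le_mul hgd1 hgd2 (abs_nonneg _) (by positivity)
      nlinarith [abs_nonneg gd1, abs_nonneg gd2]
    have t4 : |3*fd1^2*gd1| ≤ 3*(32/27)^2*(3*Y) := by
      rw [abs_mul, abs_mul]
      have h2 : |(3:ℝ)| = 3 := by norm_num
      rw [h2]
      have h1 : |fd1^2| ≤ (32/27)^2 := by
        rw [abs_pow]; exact pow_le_pow_left₀ (abs_nonneg _) hfd1 2
      nlinarith [abs_nonneg gd1, abs_nonneg (fd1^2), hgd1]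
    have t5 : |3*gd1^3| ≤ 3*(3*Y)^3 := by
      rw [abs_mul, abs_pow]
      have h2 : |(3:ℝ)| = 3 := by norm_num
      rw [h2]
      have := pow_le_pow_left₀ (abs_nonneg gd1) hgd1 3
      nlinarith
    have hsum : |(-gd3*A^2 + 2*fd2*gd1*A + 4*gd1*gd2*A - 3*fd1^2*gd1 - 3*gd1^3)|
        ≤ |gd3*A^2| + |2*fd2*gd1*A| + |4*gd1*gd2*A| + |3*fd1^2*gd1| + |3*gd1^3| := by
      calc |(-gd3*A^2 + 2*fd2*gd1*A + 4*gd1*gd2*A - 3*fd1^2*gd1 - 3*gd1^3)|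
          ≤ |(-gd3*A^2 + 2*fd2*gd1*A + 4*gd1*gd2*A - 3*fd1^2*gd1)| + |3*gd1^3| :=
            abs_sub _ _
        _ ≤ |(-gd3*A^2 + 2*fd2*gd1*A + 4*gd1*gd2*A)| + |3*fd1^2*gd1| + |3*gd1^3| := by
            have := abs_sub (-gd3*A^2 + 2*fd2*gd1*A + 4*gd1*gd2*A) (3*fd1^2*gd1)
            linarith
        _ ≤ |(-gd3*A^2 + 2*fd2*gd1*A)| + |4*gd1*gd2*A| + |3*fd1^2*gd1| + |3*gd1^3| := by
            have := abs_add_le (-gd3*A^2 + 2*fd2*gd1*A) (4*gd1*gd2*A)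
            linarith
        _ ≤ |(-gd3*A^2)| + |2*fd2*gd1*A| + |4*gd1*gd2*A| + |3*fd1^2*gd1| + |3*gd1^3| := by
            have := abs_add_le (-gd3*A^2) (2*fd2*gd1*A)
            linarith
        _ = |gd3*A^2| + |2*fd2*gd1*A| + |4*gd1*gd2*A| + |3*fd1^2*gd1| + |3*gd1^3| := by
            rw [neg_mul, abs_neg]
    have hY2 : Y^2 ≤ 1/4 := by nlinarith
    have h39 : 2*(64/27)*(3*Y)*A + 4*(3*Y)*2*A ≤ 39*Y*A := by nlinarith
    have h33 : 3*(32/27)^2*(3*Y) + 3*(3*Y)^3 ≤ 33*Y := by nlinarith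
    linarith
  -- polynomial comparisons
  have hpoly1 : 512/81*A^2 + 16*A + 13 ≤ 170*A^4 := by
    nlinarith [sq_nonneg (A - 16/25), mul_nonneg (sub_nonneg.2 hA0) (sq_nonneg (A - 16/25)),
      sq_nonneg ((A - 16/25)^2), sq_nonneg A, hA0]
  have hpoly2 : 24*A^3 + 39*A^2 + 33*A ≤ 280*A^4 := by
    nlinarith [sq_nonneg (A - 16/25), mul_nonneg (sub_nonneg.2 hA0) (sq_nonneg (A - 16/25)),
      sq_nonneg ((A - 16/25)^2), sq_nonneg A, hA0]
  -- curvature bounds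
  have hKx : |(-fd3*A^2 + 2*fd1*gd2*A + 4*fd1*fd2*A - 3*fd1*gd1^2 - 3*fd1^3)/(2*A^4)| ≤ 85 := by
    rw [abs_div, abs_of_pos hA4, div_le_iff₀ hA4]
    calc |(-fd3*A^2 + 2*fd1*gd2*A + 4*fd1*fd2*A - 3*fd1*gd1^2 - 3*fd1^3)|
        ≤ 512/81*A^2 + 16*A + 13 := hNx
      _ ≤ 170*A^4 := hpoly1
      _ = 85 * (2*A^4) := by ring
  have hKyf : |(-gd3*A^2 + 2*fd2*gd1*A + 4*gd1*gd2*A - 3*fd1^2*gd1 - 3*gd1^3)/(2*A^4)| * f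
      ≤ 140*Y := by
    rw [abs_div, abs_of_pos hA4]
    rw [div_mul_eq_mul_div, div_le_iff₀ hA4]
    calc |(-gd3*A^2 + 2*fd2*gd1*A + 4*gd1*gd2*A - 3*fd1^2*gd1 - 3*gd1^3)| * f
        ≤ (24*Y*A^2 + 39*Y*A + 33*Y) * A := by
          apply mul_le_mul hNy hfA hf0
          positivity
      _ = (24*A^3 + 39*A^2 + 33*A) * Y := by ring
      _ ≤ (280*A^4) * Y := by
          apply mul_le_mul_of_nonneg_right hpoly2 hY0.le
      _ = 140*Y*(2*A^4) := by ring
  -- combine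
  have habs : |((-fd3*A^2 + 2*fd1*gd2*A + 4*fd1*fd2*A - 3*fd1*gd1^2 - 3*fd1^3)/(2*A^4)) * gY
      - ((-gd3*A^2 + 2*fd2*gd1*A + 4*gd1*gd2*A - 3*fd1^2*gd1 - 3*gd1^3)/(2*A^4)) * f * ydv|
      ≤ |((-fd3*A^2 + 2*fd1*gd2*A + 4*fd1*fd2*A - 3*fd1*gd1^2 - 3*fd1^3)/(2*A^4))| * gY
      + |((-gd3*A^2 + 2*fd2*gd1*A + 4*gd1*gd2*A - 3*fd1^2*gd1 - 3*gd1^3)/(2*A^4))| * f * |ydv| := by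
    calc |((-fd3*A^2 + 2*fd1*gd2*A + 4*fd1*fd2*A - 3*fd1*gd1^2 - 3*fd1^3)/(2*A^4)) * gY
      - ((-gd3*A^2 + 2*fd2*gd1*A + 4*gd1*gd2*A - 3*fd1^2*gd1 - 3*gd1^3)/(2*A^4)) * f * ydv|
        ≤ |((-fd3*A^2 + 2*fd1*gd2*A + 4*fd1*fd2*A - 3*fd1*gd1^2 - 3*fd1^3)/(2*A^4)) * gY|
          + |((-gd3*A^2 + 2*fd2*gd1*A + 4*gd1*gd2*A - 3*fd1^2*gd1 - 3*gd1^3)/(2*A^4)) * f * ydv| :=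
          abs_sub _ _
      _ = |((-fd3*A^2 + 2*fd1*gd2*A + 4*fd1*fd2*A - 3*fd1*gd1^2 - 3*fd1^3)/(2*A^4))| * gY
          + |((-gd3*A^2 + 2*fd2*gd1*A + 4*gd1*gd2*A - 3*fd1^2*gd1 - 3*gd1^3)/(2*A^4))| * f * |ydv| := by
          rw [abs_mul, abs_mul, abs_mul, abs_of_nonneg hgY0, abs_of_nonneg hf0]
  have h1 : |((-fd3*A^2 + 2*fd1*gd2*A + 4*fd1*fd2*A - 3*fd1*gd1^2 - 3*fd1^3)/(2*A^4))| * gY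
      ≤ 85 * Y^2 :=
    mul_le_mul hKx hgY hgY0 (by norm_num)
  have h2 : |((-gd3*A^2 + 2*fd2*gd1*A + 4*gd1*gd2*A - 3*fd1^2*gd1 - 3*gd1^3)/(2*A^4))| * f * |ydv|
      ≤ 140*Y * (5/4*Y) :=
    mul_le_mul hKyf hyd (abs_nonneg _) (by positivity)
  have : 140*Y*(5/4*Y) = 175*Y^2 := by ring
  nlinarith [sq_nonneg Y]


lemma abs_mul_le' {a b A B : ℝ} (ha : |a| ≤ A) (hb : |b| ≤ B) : |a*b| ≤ A*B := by
  rw [abs_mul]; exact mul_le_mul ha hb (abs_nonneg _) ((abs_nonneg a).trans ha)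

section pb
variable {μ : ℝ} (hμ0 : 0 < μ) (hμ1 : μ < 1/4)

include hμ0 hμ1

lemma cpos' (x : ℝ) : 3/4 ≤ 1 + μ * Real.cos x := by
  nlinarith [Real.neg_one_le_cos x, Real.cos_le_one x]

lemma cub (x : ℝ) : 1 + μ * Real.cos x ≤ 5/4 := by
  nlinarith [Real.neg_one_le_cos x, Real.cos_le_one x]

lemma inv3 (x : ℝ) : |((1 + μ * Real.cos x)^3)⁻¹| ≤ 64/27 := by
  have hc := cpos' hμ0 hμ1 x
  have h3 : (27:ℝ)/64 ≤ (1 + μ * Real.cos x)^3 := by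
    have := pow_le_pow_left₀ (show (0:ℝ) ≤ 3/4 by norm_num) hc 3
    norm_num at this; linarith
  have := inv_anti₀ (show (0:ℝ) < 27/64 by norm_num) h3
  rw [abs_of_pos (by positivity)]
  calc ((1 + μ * Real.cos x)^3)⁻¹ ≤ ((27:ℝ)/64)⁻¹ := this
    _ = 64/27 := by norm_num

lemma inv4 (x : ℝ) : |((1 + μ * Real.cos x)^4)⁻¹| ≤ 256/81 := by
  have hc := cpos' hμ0 hμ1 x
  have h3 : (81:ℝ)/256 ≤ (1 + μ * Real.cos x)^4 := by
    have := pow_le_pow_left₀ (show (0:ℝ) ≤ 3/4 by norm_num) hc 4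
    norm_num at this; linarith
  have := inv_anti₀ (show (0:ℝ) < 81/256 by norm_num) h3
  rw [abs_of_pos (by positivity)]
  calc ((1 + μ * Real.cos x)^4)⁻¹ ≤ ((81:ℝ)/256)⁻¹ := this
    _ = 256/81 := by norm_num

lemma inv5 (x : ℝ) : |((1 + μ * Real.cos x)^5)⁻¹| ≤ 1024/243 := by
  have hc := cpos' hμ0 hμ1 x
  have h3 : (243:ℝ)/1024 ≤ (1 + μ * Real.cos x)^5 := by
    have := pow_le_pow_left₀ (show (0:ℝ) ≤ 3/4 by norm_num) hc 5
    norm_num at this; linarith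
  have := inv_anti₀ (show (0:ℝ) < 243/1024 by norm_num) h3
  rw [abs_of_pos (by positivity)]
  calc ((1 + μ * Real.cos x)^5)⁻¹ ≤ ((243:ℝ)/1024)⁻¹ := this
    _ = 1024/243 := by norm_num

lemma bfd1 (x : ℝ) : |2 * μ * Real.sin x * ((1 + μ * Real.cos x)^3)⁻¹| ≤ 32/27 := by
  have h1 : |2 * μ * Real.sin x| ≤ 1/2 := by
    rw [abs_mul, abs_mul, abs_of_nonneg (by norm_num : (0:ℝ) ≤ 2), abs_of_pos hμ0]
    nlinarith [Real.abs_sin_le_one x, abs_nonneg (Real.sin x)]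
  calc |2 * μ * Real.sin x * ((1 + μ * Real.cos x)^3)⁻¹| ≤ (1/2)*(64/27) :=
      abs_mul_le' h1 (inv3 hμ0 hμ1 x)
    _ = 32/27 := by norm_num

lemma bfd2 (x : ℝ) : |2 * μ * Real.cos x * ((1 + μ * Real.cos x)^3)⁻¹
    + 6 * μ^2 * (Real.sin x)^2 * ((1 + μ * Real.cos x)^4)⁻¹| ≤ 64/27 := by
  have h1 : |2 * μ * Real.cos x| ≤ 1/2 := by
    rw [abs_mul, abs_mul, abs_of_nonneg (by norm_num : (0:ℝ) ≤ 2), abs_of_pos hμ0]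
    nlinarith [Real.abs_cos_le_one x, abs_nonneg (Real.cos x)]
  have h2 : |6 * μ^2 * (Real.sin x)^2| ≤ 3/8 := by
    rw [abs_mul, abs_mul, abs_of_nonneg (by norm_num : (0:ℝ) ≤ 6), abs_pow, abs_pow,
      abs_of_pos hμ0]
    have hss : |Real.sin x|^2 ≤ 1 := by
      nlinarith [Real.abs_sin_le_one x, abs_nonneg (Real.sin x)]
    have hμ2 : μ^2 ≤ 1/16 := by nlinarith
    nlinarith [mul_le_mul hμ2 hss (by positivity) (by norm_num), sq_nonneg μ,
      pow_nonneg (abs_nonneg (Real.sin x)) 2]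
  have t1 := abs_mul_le' h1 (inv3 hμ0 hμ1 x)
  have t2 := abs_mul_le' h2 (inv4 hμ0 hμ1 x)
  calc |2 * μ * Real.cos x * ((1 + μ * Real.cos x)^3)⁻¹
      + 6 * μ^2 * (Real.sin x)^2 * ((1 + μ * Real.cos x)^4)⁻¹|
      ≤ |2 * μ * Real.cos x * ((1 + μ * Real.cos x)^3)⁻¹|
        + |6 * μ^2 * (Real.sin x)^2 * ((1 + μ * Real.cos x)^4)⁻¹| := abs_add_le _ _
    _ ≤ (1/2)*(64/27) + (3/8)*(256/81) := by linarith
    _ ≤ 64/27 := by norm_num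

lemma bfd3 (x : ℝ) : |-(2 * μ * Real.sin x) * ((1 + μ * Real.cos x)^3)⁻¹
    + 18 * μ^2 * Real.sin x * Real.cos x * ((1 + μ * Real.cos x)^4)⁻¹
    + 24 * μ^3 * (Real.sin x)^3 * ((1 + μ * Real.cos x)^5)⁻¹| ≤ 512/81 := by
  have h1 : |-(2 * μ * Real.sin x)| ≤ 1/2 := by
    rw [abs_neg, abs_mul, abs_mul, abs_of_nonneg (by norm_num : (0:ℝ) ≤ 2), abs_of_pos hμ0]
    nlinarith [Real.abs_sin_le_one x, abs_nonneg (Real.sin x)]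
  have h2 : |18 * μ^2 * Real.sin x * Real.cos x| ≤ 9/8 := by
    rw [abs_mul, abs_mul, abs_mul, abs_of_nonneg (by norm_num : (0:ℝ) ≤ 18), abs_pow,
      abs_of_pos hμ0]
    have hss : |Real.sin x| * |Real.cos x| ≤ 1 := by
      nlinarith [Real.abs_sin_le_one x, Real.abs_cos_le_one x, abs_nonneg (Real.sin x),
        abs_nonneg (Real.cos x)]
    have hμ2 : μ^2 ≤ 1/16 := by nlinarith
    have key : 18 * μ^2 * (|Real.sin x| * |Real.cos x|) ≤ 18 * (1/16) * 1 := by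
      apply mul_le_mul _ hss (by positivity) (by norm_num)
      nlinarith
    nlinarith [key]
  have h3 : |24 * μ^3 * (Real.sin x)^3| ≤ 3/8 := by
    rw [abs_mul, abs_mul, abs_of_nonneg (by norm_num : (0:ℝ) ≤ 24), abs_pow, abs_pow,
      abs_of_pos hμ0]
    have hs := Real.abs_sin_le_one x
    have hs0 := abs_nonneg (Real.sin x)
    have h1 : |Real.sin x|^3 ≤ 1 := by
      calc |Real.sin x|^3 ≤ 1^3 := pow_le_pow_left₀ hs0 hs 3
        _ = 1 := one_pow 3
    have h2 : μ^3 ≤ (1/4)^3 := pow_le_pow_left₀ hμ0.le hμ1.le 3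
    have key : 24 * μ^3 * |Real.sin x|^3 ≤ 24 * (1/4)^3 * 1 := by
      apply mul_le_mul _ h1 (by positivity) (by positivity)
      nlinarith [pow_nonneg hμ0.le 3]
    nlinarith [key]
  have t1 := abs_mul_le' h1 (inv3 hμ0 hμ1 x)
  have t2 := abs_mul_le' h2 (inv4 hμ0 hμ1 x)
  have t3 := abs_mul_le' h3 (inv5 hμ0 hμ1 x)
  calc |-(2 * μ * Real.sin x) * ((1 + μ * Real.cos x)^3)⁻¹
      + 18 * μ^2 * Real.sin x * Real.cos x * ((1 + μ * Real.cos x)^4)⁻¹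
      + 24 * μ^3 * (Real.sin x)^3 * ((1 + μ * Real.cos x)^5)⁻¹|
      ≤ |-(2 * μ * Real.sin x) * ((1 + μ * Real.cos x)^3)⁻¹
        + 18 * μ^2 * Real.sin x * Real.cos x * ((1 + μ * Real.cos x)^4)⁻¹|
        + |24 * μ^3 * (Real.sin x)^3 * ((1 + μ * Real.cos x)^5)⁻¹| := abs_add_le _ _
    _ ≤ |-(2 * μ * Real.sin x) * ((1 + μ * Real.cos x)^3)⁻¹|
        + |18 * μ^2 * Real.sin x * Real.cos x * ((1 + μ * Real.cos x)^4)⁻¹|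
        + |24 * μ^3 * (Real.sin x)^3 * ((1 + μ * Real.cos x)^5)⁻¹| := by
        have := abs_add_le (-(2 * μ * Real.sin x) * ((1 + μ * Real.cos x)^3)⁻¹)
          (18 * μ^2 * Real.sin x * Real.cos x * ((1 + μ * Real.cos x)^4)⁻¹)
        linarith
    _ ≤ (1/2)*(64/27) + (9/8)*(256/81) + (3/8)*(1024/243) := by linarith
    _ ≤ 512/81 := by norm_num

end pb


section yb
variable {μ κ : ℝ} (hμ0 : 0 < μ) (hμ1 : μ < 1/4)

lemma Ypos (x : ℝ) : 0 < (1/2 : ℝ) * (Real.cosh (κ + x + μ * Real.sin x))⁻¹ := by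
  have := Real.cosh_pos (x := κ + x + μ * Real.sin x)
  positivity

lemma Yle (x : ℝ) : (1/2 : ℝ) * (Real.cosh (κ + x + μ * Real.sin x))⁻¹ ≤ 1/2 := by
  have h1 := Real.one_le_cosh (κ + x + μ * Real.sin x)
  have h2 : (Real.cosh (κ + x + μ * Real.sin x))⁻¹ ≤ 1 := by
    rw [inv_le_one_iff₀]; right; exact h1
  linarith

include hμ0 hμ1 in
lemma ydbound (x : ℝ) :
    |(-((1/2) * Real.sinh (κ + x + μ * Real.sin x) * (1 + μ * Real.cos x)
        * ((Real.cosh (κ + x + μ * Real.sin x)) ^ 2)⁻¹))|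
      ≤ 5/4 * ((1/2) * (Real.cosh (κ + x + μ * Real.sin x))⁻¹) := by
  set u := κ + x + μ * Real.sin x with hu
  have hC1 : 1 ≤ Real.cosh u := Real.one_le_cosh u
  have hC0 : 0 < Real.cosh u := by linarith
  have hSC : |Real.sinh u| ≤ Real.cosh u := by
    rw [Real.abs_sinh, ← Real.cosh_abs]
    nlinarith [Real.cosh_sub_sinh |u|, Real.exp_pos (-|u|)]
  have hc0 : (0:ℝ) < 1 + μ * Real.cos x := by
    nlinarith [Real.neg_one_le_cos x, Real.cos_le_one x]
  have hc5 : 1 + μ * Real.cos x ≤ 5/4 := by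
    nlinarith [Real.neg_one_le_cos x, Real.cos_le_one x]
  rw [abs_neg, abs_mul, abs_mul, abs_mul, abs_of_nonneg (by norm_num : (0:ℝ) ≤ 1/2),
    abs_of_pos hc0, abs_of_pos (by positivity : (0:ℝ) < ((Real.cosh u)^2)⁻¹)]
  have hCC : Real.cosh u * (Real.cosh u)⁻¹ = 1 := mul_inv_cancel₀ hC0.ne'
  have h2 : ((Real.cosh u)^2)⁻¹ = (Real.cosh u)⁻¹ * (Real.cosh u)⁻¹ := by
    rw [sq, mul_inv]
  rw [h2]
  have hiC : (0:ℝ) < (Real.cosh u)⁻¹ := by positivity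
  nlinarith [mul_le_mul hSC hc5 hc0.le hC0.le, abs_nonneg (Real.sinh u),
    mul_pos hiC hiC, mul_le_mul_of_nonneg_right (mul_le_mul hSC hc5 hc0.le hC0.le)
      (mul_pos hiC hiC).le]
end yb

section yexp
variable {μ κ : ℝ} (hμ0 : 0 < μ) (hμ1 : μ < 1/4)
include hμ0 hμ1

lemma yexp_basic (x : ℝ) : (1/2 : ℝ) * (Real.cosh (κ + x + μ * Real.sin x))⁻¹
    ≤ Real.exp (-(κ + x + μ * Real.sin x)) := by
  set u := κ + x + μ * Real.sin x with hu
  have h1 : Real.exp u / 2 ≤ Real.cosh u := by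
    rw [Real.cosh_eq]
    have := Real.exp_pos (-u)
    linarith
  have h2 : (Real.cosh u)⁻¹ ≤ (Real.exp u / 2)⁻¹ :=
    inv_anti₀ (by positivity) h1
  have h3 : (Real.exp u / 2)⁻¹ = 2 * Real.exp (-u) := by
    rw [Real.exp_neg]
    field_simp
  nlinarith [Real.exp_pos (-u)]

lemma yexp_basic' (x : ℝ) : (1/2 : ℝ) * (Real.cosh (κ + x + μ * Real.sin x))⁻¹
    ≤ Real.exp (κ + x + μ * Real.sin x) := by
  set u := κ + x + μ * Real.sin x with hu
  have h1 : Real.exp (-u) / 2 ≤ Real.cosh u := by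
    rw [Real.cosh_eq]
    have := Real.exp_pos u
    linarith
  have h2 : (Real.cosh u)⁻¹ ≤ (Real.exp (-u) / 2)⁻¹ :=
    inv_anti₀ (by positivity) h1
  have h3 : (Real.exp (-u) / 2)⁻¹ = 2 * Real.exp u := by
    rw [Real.exp_neg]
    field_simp
  nlinarith [Real.exp_pos u]

lemma yexp1 (x : ℝ) : (1/2 : ℝ) * (Real.cosh (κ + x + μ * Real.sin x))⁻¹
    ≤ Real.exp (|κ| + 1/4) * Real.exp (-x) := by
  refine (yexp_basic hμ0 hμ1 x).trans ?_
  rw [← Real.exp_add]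
  apply Real.exp_le_exp.2
  have h1 : -κ ≤ |κ| := neg_le_abs κ
  have h2 : -(μ * Real.sin x) ≤ 1/4 := by
    nlinarith [Real.neg_one_le_sin x, Real.sin_le_one x]
  linarith

lemma yexp2 (x : ℝ) : (1/2 : ℝ) * (Real.cosh (κ + x + μ * Real.sin x))⁻¹
    ≤ Real.exp (|κ| + 1/4) * Real.exp x := by
  refine (yexp_basic' hμ0 hμ1 x).trans ?_
  rw [← Real.exp_add]
  apply Real.exp_le_exp.2
  have h1 : κ ≤ |κ| := le_abs_self κ
  have h2 : μ * Real.sin x ≤ 1/4 := by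
    nlinarith [Real.neg_one_le_sin x, Real.sin_le_one x]
  linarith

end yexp

lemma exp_negL_le (L : ℝ) (hL : 0 ≤ L) : Real.exp (-L) ≤ (Real.cosh L)⁻¹ := by
  have h1 : Real.cosh L ≤ Real.exp L := by
    rw [Real.cosh_eq]
    have h2 : Real.exp (-L) ≤ Real.exp L := Real.exp_le_exp.2 (by linarith)
    linarith
  have h2 := inv_anti₀ (Real.cosh_pos (x := L)) h1
  rwa [← Real.exp_neg] at h2

lemma exp_half_lt_two : Real.exp (1/2 : ℝ) < 2 := by
  have h : Real.exp (1/2 : ℝ) ^ 2 < 2 ^ 2 := by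
    rw [← Real.exp_nat_mul]
    norm_num
    calc Real.exp 1 < 2.7182818286 := Real.exp_one_lt_d9
      _ < 4 := by norm_num
  have := Real.exp_pos (1/2 : ℝ)
  nlinarith

open MeasureTheory Set

lemma tail_bound (L C : ℝ) (I : ℝ → ℝ)
    (hbound : ∀ x : ℝ, L < x → |I x| ≤ C * Real.exp (-2*x)) :
    |∫ x in Set.Ioi L, I x| ≤ C * (Real.exp (-2*L) / 2) := by
  have hint : IntegrableOn (fun x : ℝ => C * Real.exp (-2*x)) (Set.Ioi L) :=
    (exp_neg_integrableOn_Ioi L (by norm_num : (0:ℝ) < 2)).const_mul C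
  have h1 : |∫ x in Set.Ioi L, I x| ≤ ∫ x in Set.Ioi L, ‖I x‖ := by
    rw [← Real.norm_eq_abs]
    exact norm_integral_le_integral_norm I
  have h2 : (∫ x in Set.Ioi L, ‖I x‖) ≤ ∫ x in Set.Ioi L, C * Real.exp (-2*x) := by
    apply integral_mono_of_nonneg
    · exact Filter.Eventually.of_forall fun x => norm_nonneg _
    · exact hint
    · rw [Filter.EventuallyLE, ae_restrict_iff' measurableSet_Ioi]
      exact Filter.Eventually.of_forall fun x hx => by
        rw [Real.norm_eq_abs]; exact hbound x hx
  have h3 : (∫ x in Set.Ioi L, C * Real.exp (-2*x)) = C * (Real.exp (-2*L) / 2) := by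
    rw [MeasureTheory.integral_const_mul]
    have h4 : (∫ x in Set.Ioi L, Real.exp (-2*x)) = Real.exp (-2*L) / 2 := by
      have h5 : (∫ x in Set.Ioi L, Real.exp (-2*x))
          = ∫ x in Set.Ioi L, (fun t => Real.exp (-t)) (2*x) := by
        congr 1; funext x; simp only [neg_mul]
      rw [h5, integral_comp_mul_left_Ioi (fun t => Real.exp (-t)) L
        (by norm_num : (0:ℝ) < 2), integral_exp_neg_Ioi]
      rw [smul_eq_mul]
      ring_nf
    rw [h4]
  rw [← h3]
  exact h1.trans h2


/-- The paper's bound on the tail of the Melnikov integral: for the example surface with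
`f(x) = (1 + μ cos x)⁻²`, `g(y) = y²(1 − y²)`, homoclinic orbit
`y(x) = (1/2) sech(κ + x + μ sin x)`, curvature partials `K_x`, `K_y`, and integrand
`I = K_x·g(y) − K_y·f·y'`, the tail `B_L = |∫_L^∞ I| + |∫_{−∞}^{−L} I|` satisfies
`B_L ≤ 1200 (1 + 2 e^{2|κ|}) ((1/2) sech L)²` whenever `0 < μ < 1/4` and `L > |κ| + 1`. -/
theorem stmt15 (μ κ L : ℝ) (hμ0 : 0 < μ) (hμ1 : μ < 1 / 4) (hL : |κ| + 1 < L)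
    (f g y A Kx Ky I : ℝ → ℝ)
    (hf : ∀ x : ℝ, f x = ((1 + μ * Real.cos x) ^ 2)⁻¹)
    (hg : ∀ t : ℝ, g t = t ^ 2 * (1 - t ^ 2))
    (hy : ∀ x : ℝ, y x = (1 / 2) * (Real.cosh (κ + x + μ * Real.sin x))⁻¹)
    (hA : ∀ x : ℝ, A x = f x + g (y x))
    (hKx : ∀ x : ℝ, Kx x =
      (-(deriv (deriv (deriv f)) x) * (A x) ^ 2 +
          2 * deriv f x * deriv (deriv g) (y x) * A x +
          4 * deriv f x * deriv (deriv f) x * A x -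
          3 * deriv f x * (deriv g (y x)) ^ 2 - 3 * (deriv f x) ^ 3) /
        (2 * (A x) ^ 4))
    (hKy : ∀ x : ℝ, Ky x =
      (-(deriv (deriv (deriv g)) (y x)) * (A x) ^ 2 +
          2 * deriv (deriv f) x * deriv g (y x) * A x +
          4 * deriv g (y x) * deriv (deriv g) (y x) * A x -
          3 * (deriv f x) ^ 2 * deriv g (y x) - 3 * (deriv g (y x)) ^ 3) /
        (2 * (A x) ^ 4))
    (hI : ∀ x : ℝ, I x = Kx x * g (y x) - Ky x * f x * deriv y x) :
    |∫ x in Set.Ioi L, I x| + |∫ x in Set.Iio (-L), I x| ≤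
      1200 * (1 + 2 * Real.exp (2 * |κ|)) * ((1 / 2) * (Real.cosh L)⁻¹) ^ 2 := by
  have hμ1' : μ < 1/4 := hμ1
  have hfe : f = fun x => ((1 + μ * Real.cos x) ^ 2)⁻¹ := funext hf
  have hye : y = fun x => (1/2 : ℝ) * (Real.cosh (κ + x + μ * Real.sin x))⁻¹ := funext hy
  -- derivatives of f
  have dF1 : deriv f = fun x => 2 * μ * Real.sin x * ((1 + μ * Real.cos x) ^ 3)⁻¹ := by
    rw [hfe]; exact fder1 hμ0 hμ1'
  have dF2 : deriv (deriv f) = fun x => 2 * μ * Real.cos x * ((1 + μ * Real.cos x) ^ 3)⁻¹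
      + 6 * μ ^ 2 * (Real.sin x) ^ 2 * ((1 + μ * Real.cos x) ^ 4)⁻¹ := by
    rw [hfe]; exact fder2 hμ0 hμ1'
  have dF3 : ∀ x : ℝ, deriv (deriv (deriv f)) x
      = -(2 * μ * Real.sin x) * ((1 + μ * Real.cos x) ^ 3)⁻¹
        + 18 * μ ^ 2 * Real.sin x * Real.cos x * ((1 + μ * Real.cos x) ^ 4)⁻¹
        + 24 * μ ^ 3 * (Real.sin x) ^ 3 * ((1 + μ * Real.cos x) ^ 5)⁻¹ := by
    intro x; rw [dF2]; exact (fd3 hμ0 hμ1' x).deriv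
  -- derivatives of g
  have dG1 : deriv g = fun t => 2 * t - 4 * t ^ 3 := gd1 g hg
  have dG2 : deriv (deriv g) = fun t => 2 - 12 * t ^ 2 := gd2 g hg
  -- derivative of y
  have dY : ∀ x : ℝ, deriv y x
      = -((1/2) * Real.sinh (κ + x + μ * Real.sin x) * (1 + μ * Real.cos x)
          * ((Real.cosh (κ + x + μ * Real.sin x)) ^ 2)⁻¹) := by
    intro x; rw [hye]; exact (yd μ κ x).deriv
  -- pointwise bound
  have key : ∀ x : ℝ, |I x| ≤ 300 * (y x) ^ 2 := by
    intro x
    have hY0 : 0 < y x := by rw [hy]; exact Ypos x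
    have hYl : y x ≤ 1/2 := by rw [hy]; exact Yle x
    have hy2 : (y x) ^ 2 ≤ 1/4 := by nlinarith
    have hgY0 : 0 ≤ g (y x) := by rw [hg]; nlinarith [sq_nonneg (y x)]
    have hgYle : g (y x) ≤ (y x) ^ 2 := by rw [hg]; nlinarith [sq_nonneg (y x), sq_nonneg ((y x)^2)]
    have hf0 : 0 ≤ f x := by
      rw [hf]
      have := cne hμ0 hμ1' x
      positivity
    have hfub : 16/25 ≤ f x := by
      rw [hf]
      have hc := cpos hμ0 hμ1' x
      have hc5 : 1 + μ * Real.cos x ≤ 5/4 := cub hμ0 hμ1' x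
      have hsq : (1 + μ * Real.cos x) ^ 2 ≤ 25/16 := by nlinarith
      have := inv_anti₀ (show (0:ℝ) < (1 + μ * Real.cos x) ^ 2 by positivity) hsq
      calc (16:ℝ)/25 = ((25:ℝ)/16)⁻¹ := by norm_num
        _ ≤ ((1 + μ * Real.cos x) ^ 2)⁻¹ := this
    have hA0 : 16/25 ≤ A x := by rw [hA]; linarith
    have hfA : f x ≤ A x := by rw [hA]; linarith
    have hfd1 : |deriv f x| ≤ 32/27 := by rw [dF1]; exact bfd1 hμ0 hμ1' x
    have hfd2 : |deriv (deriv f) x| ≤ 64/27 := by rw [dF2]; exact bfd2 hμ0 hμ1' x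
    have hfd3 : |deriv (deriv (deriv f)) x| ≤ 512/81 := by rw [dF3 x]; exact bfd3 hμ0 hμ1' x
    have hgd1 : |deriv g (y x)| ≤ 3 * y x := by
      rw [dG1]
      show |2 * y x - 4 * (y x) ^ 3| ≤ 3 * y x
      rw [abs_le]; constructor <;> nlinarith
    have hgd2 : |deriv (deriv g) (y x)| ≤ 2 := by
      rw [dG2]
      show |2 - 12 * (y x) ^ 2| ≤ 2
      rw [abs_le]; constructor <;> nlinarith
    have hgd3 : |deriv (deriv (deriv g)) (y x)| ≤ 24 * y x := by
      rw [gd3 g hg (y x), abs_le]; constructor <;> nlinarith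
    have hyd : |deriv y x| ≤ 5/4 * y x := by
      rw [dY x, hy x]; exact ydbound hμ0 hμ1' x
    rw [hI x, hKx x, hKy x]
    exact algbound (A x) (y x) (f x) (deriv f x) (deriv (deriv f) x)
      (deriv (deriv (deriv f)) x) (g (y x)) (deriv g (y x)) (deriv (deriv g) (y x))
      (deriv (deriv (deriv g)) (y x)) (deriv y x) hY0 hYl hA0 hfA hf0 hfd1 hfd2 hfd3
      hgY0 hgYle hgd1 hgd2 hgd3 hyd
  -- exponential tail bounds
  set a : ℝ := |κ| + 1/4 with ha
  set C : ℝ := 300 * Real.exp (2 * a) with hC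
  have hsq : ∀ t : ℝ, (Real.exp t) ^ 2 = Real.exp (2 * t) := fun t => by
    rw [sq, ← Real.exp_add]; ring_nf
  have hb1 : ∀ x : ℝ, L < x → |I x| ≤ C * Real.exp (-2 * x) := by
    intro x _
    have h1 := key x
    have h2 : y x ≤ Real.exp a * Real.exp (-x) := by rw [hy]; exact yexp1 hμ0 hμ1' x
    have hY0 : 0 < y x := by rw [hy]; exact Ypos x
    have h3 : (y x) ^ 2 ≤ (Real.exp a * Real.exp (-x)) ^ 2 :=
      pow_le_pow_left₀ hY0.le h2 2
    have h4 : (Real.exp a * Real.exp (-x)) ^ 2 = Real.exp (2 * a) * Real.exp (-2 * x) := by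
      rw [mul_pow, hsq, hsq, show 2 * (-x) = -2 * x by ring]
    rw [hC]
    nlinarith [Real.exp_pos (2 * a), Real.exp_pos (-2 * x)]
  have hb2 : ∀ x : ℝ, L < x → |I (-x)| ≤ C * Real.exp (-2 * x) := by
    intro x _
    have h1 := key (-x)
    have h2 : y (-x) ≤ Real.exp a * Real.exp (-x) := by rw [hy]; exact yexp2 hμ0 hμ1' (-x)
    have hY0 : 0 < y (-x) := by rw [hy]; exact Ypos (-x)
    have h3 : (y (-x)) ^ 2 ≤ (Real.exp a * Real.exp (-x)) ^ 2 :=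
      pow_le_pow_left₀ hY0.le h2 2
    have h4 : (Real.exp a * Real.exp (-x)) ^ 2 = Real.exp (2 * a) * Real.exp (-2 * x) := by
      rw [mul_pow, hsq, hsq, show 2 * (-x) = -2 * x by ring]
    rw [hC]
    nlinarith [Real.exp_pos (2 * a), Real.exp_pos (-2 * x)]
  have hC0 : 0 ≤ C := by positivity
  have t1 : |∫ x in Set.Ioi L, I x| ≤ C * (Real.exp (-2 * L) / 2) :=
    tail_bound L C I hb1
  have hleft : (∫ x in Set.Iio (-L), I x) = ∫ x in Set.Ioi L, I (-x) := by
    rw [← MeasureTheory.integral_Iic_eq_integral_Iio]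
    exact (integral_comp_neg_Ioi L I).symm
  have t2 : |∫ x in Set.Iio (-L), I x| ≤ C * (Real.exp (-2 * L) / 2) := by
    rw [hleft]
    exact tail_bound L C (fun x => I (-x)) hb2
  -- final arithmetic
  have hL0 : 0 ≤ L := by
    have := abs_nonneg κ; linarith
  have hcosh : Real.exp (-L) ≤ (Real.cosh L)⁻¹ := exp_negL_le L hL0
  have hcosh2 : Real.exp (-2 * L) ≤ ((Real.cosh L)⁻¹) ^ 2 := by
    calc Real.exp (-2 * L) = (Real.exp (-L)) ^ 2 := by
          rw [hsq, show 2 * (-L) = -2 * L by ring]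
      _ ≤ ((Real.cosh L)⁻¹) ^ 2 :=
          pow_le_pow_left₀ (Real.exp_pos (-L)).le hcosh 2
  have hCle : C ≤ 600 * Real.exp (2 * |κ|) := by
    rw [hC, ha, show 2 * (|κ| + 1/4) = 2 * |κ| + 1/2 by ring, Real.exp_add]
    nlinarith [exp_half_lt_two, Real.exp_pos (2 * |κ|), Real.exp_pos (1/2 : ℝ)]
  have hE1 : (1:ℝ) ≤ Real.exp (2 * |κ|) := by
    rw [show (1:ℝ) = Real.exp 0 by rw [Real.exp_zero]]
    exact Real.exp_le_exp.2 (by positivity)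
  calc |∫ x in Set.Ioi L, I x| + |∫ x in Set.Iio (-L), I x|
      ≤ C * Real.exp (-2 * L) := by linarith
    _ ≤ 600 * Real.exp (2 * |κ|) * Real.exp (-2 * L) :=
        mul_le_mul_of_nonneg_right hCle (Real.exp_pos _).le
    _ ≤ 600 * Real.exp (2 * |κ|) * ((Real.cosh L)⁻¹) ^ 2 := by
        apply mul_le_mul_of_nonneg_left hcosh2
        positivity
    _ ≤ 1200 * (1 + 2 * Real.exp (2 * |κ|)) * ((1 / 2) * (Real.cosh L)⁻¹) ^ 2 := by
        have hq : ((1:ℝ) / 2 * (Real.cosh L)⁻¹) ^ 2 = 1/4 * ((Real.cosh L)⁻¹) ^ 2 := by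
          ring
        rw [hq]
        nlinarith [sq_nonneg ((Real.cosh L)⁻¹), Real.exp_pos (2 * |κ|)]
end
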